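/- Let A be an algebra and M an ideal of A. For every n ∈ ℕ, the intersection over k + l = n of (M^{k+1} ⊗ A + A ⊗ M^{l+1}) equals the sum over i + j > n of M^i ⊗ M^j. -/

import Mathlib

/-!
Over a field every descending filtration `V = F₀ ⊇ F₁ ⊇ ⋯` splits: differences of projections
onto the `Fᵢ` give endomorphisms `e₀, …, e_{n+1}` summing to the identity with `eᵢ V ⊆ Fᵢ` and
`eᵢ Fᵢ₊₁ = 0` for `i ≤ n`. Write `x = Σ (eᵢ ⊗ e'ⱼ) x`. The terms with `i + j > n` lie in
`Fᵢ ⊗ Gⱼ`; if `x` lies in every `F_{k+1} ⊗ W + V ⊗ G_{l+1}` with `k + l = n`, then taking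
`k = i` kills the terms with `i + j ≤ n`, since `G_{n-i+1} ⊆ G_{j+1}`. The powers of an ideal,
with `M⁰ = A`, form such a filtration.
-/

open TensorProduct

variable {K A : Type*} [Field K] [Ring A] [Algebra K A]

/-- The image of `p ⊗ q` inside `A ⊗ A`. -/
noncomputable def tensorSub (p q : Submodule K A) : Submodule K (A ⊗[K] A) :=
  LinearMap.range (TensorProduct.map p.subtype q.subtype)

/-- Powers of a submodule, with the convention `M⁰ = A`. -/
noncomputable def Mpow (M : Submodule K A) : ℕ → Submodule K A
  | 0 => ⊤
  | n + 1 => M ^ (n + 1)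

open LinearMap (ker range)

variable {V W V' W' : Type*} [AddCommGroup V] [Module K V] [AddCommGroup W] [Module K W]
  [AddCommGroup V'] [Module K V'] [AddCommGroup W'] [Module K W']

theorem Submodule.exists_isProj (p : Submodule K V) :
    ∃ f : V →ₗ[K] V, LinearMap.IsProj p f := by
  obtain ⟨q, hq⟩ := p.exists_isCompl
  exact ⟨p.projection q hq, projection_apply_mem hq, fun _ ↦ projection_apply_of_mem_left hq⟩

theorem exists_splitting_of_antitone {F : ℕ → Submodule K V} (hF : Antitone F) (hF0 : F 0 = ⊤)
    (N : ℕ) : ∃ e : ℕ → V →ₗ[K] V, ∑ i ∈ Finset.range (N + 1), e i = LinearMap.id ∧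
      (∀ i, range (e i) ≤ F i) ∧ ∀ i < N, F (i + 1) ≤ ker (e i) := by
  choose P hP using fun i => (F i).exists_isProj
  refine ⟨fun i => if i < N then P i - P (i + 1) else P i, ?_, fun i => ?_, fun i hi x hx => ?_⟩
  · have hP0 : P 0 = LinearMap.id :=
      LinearMap.ext fun x => (hP 0).map_id x (hF0 ▸ Submodule.mem_top)
    rw [Finset.sum_range_succ, Finset.sum_congr rfl fun i hi => if_pos (Finset.mem_range.1 hi),
      Finset.sum_range_sub', if_neg (lt_irrefl N), hP0, sub_add_cancel]
  · rintro _ ⟨x, rfl⟩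
    dsimp only
    split_ifs
    · exact sub_mem ((hP i).map_mem x) (hF i.le_succ ((hP (i + 1)).map_mem x))
    · exact (hP i).map_mem x
  · simp only [LinearMap.mem_ker, if_pos hi, LinearMap.sub_apply, (hP (i + 1)).map_id x hx,
      (hP i).map_id x (hF i.le_succ hx), sub_self]

theorem TensorProduct.map_sum_sum {ι κ : Type*} (s : Finset ι) (t : Finset κ)
    (f : ι → V →ₗ[K] V') (g : κ → W →ₗ[K] W') :
    map (∑ i ∈ s, f i) (∑ j ∈ t, g j) = ∑ i ∈ s, ∑ j ∈ t, map (f i) (g j) := by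
  simp only [← mapBilinear_apply, map_sum, LinearMap.sum_apply]
  exact Finset.sum_comm

theorem range_map_le_range_mapIncl {f : V →ₗ[K] V'} {g : W →ₗ[K] W'} {p : Submodule K V'}
    {q : Submodule K W'} (hf : range f ≤ p) (hg : range g ≤ q) :
    range (map f g) ≤ range (mapIncl p q) :=
  range_map_mono (by simpa) (by simpa)

theorem range_mapIncl_le_ker_map_left {f : V →ₗ[K] V'} (g : W →ₗ[K] W') {p : Submodule K V}
    (q : Submodule K W) (hp : p ≤ ker f) : range (mapIncl p q) ≤ ker (map f g) := by
  rintro _ ⟨y, rfl⟩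
  rw [LinearMap.mem_ker, mapIncl, map_map, LinearMap.le_ker_iff_comp_subtype_eq_zero.1 hp,
    map_zero_left, LinearMap.zero_apply]

theorem range_mapIncl_le_ker_map_right (f : V →ₗ[K] V') {g : W →ₗ[K] W'} (p : Submodule K V)
    {q : Submodule K W} (hq : q ≤ ker g) : range (mapIncl p q) ≤ ker (map f g) := by
  rintro _ ⟨y, rfl⟩
  rw [LinearMap.mem_ker, mapIncl, map_map, LinearMap.le_ker_iff_comp_subtype_eq_zero.1 hq,
    map_zero_right, LinearMap.zero_apply]

section Filtration

variable {F : ℕ → Submodule K V} {G : ℕ → Submodule K W}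

theorem iSup_range_mapIncl_le_iInf (hF : Antitone F) (hG : Antitone G) (n : ℕ) :
    ⨆ (p : ℕ × ℕ) (_ : n < p.1 + p.2), range (mapIncl (F p.1) (G p.2)) ≤
      ⨅ p ∈ Finset.HasAntidiagonal.antidiagonal n,
        range (mapIncl (F (p.1 + 1)) ⊤) ⊔ range (mapIncl ⊤ (G (p.2 + 1))) := by
  refine iSup₂_le fun p hp => le_iInf₂ fun q hq => ?_
  rw [Finset.HasAntidiagonal.mem_antidiagonal] at hq
  by_cases h : q.1 + 1 ≤ p.1
  · exact le_sup_of_le_left (range_mapIncl_mono (hF h) le_top)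
  · exact le_sup_of_le_right (range_mapIncl_mono le_top (hG (by omega)))

theorem iInf_le_iSup_range_mapIncl (hF : Antitone F) (hG : Antitone G) (hF0 : F 0 = ⊤)
    (hG0 : G 0 = ⊤) (n : ℕ) :
    ⨅ p ∈ Finset.HasAntidiagonal.antidiagonal n,
        range (mapIncl (F (p.1 + 1)) ⊤) ⊔ range (mapIncl ⊤ (G (p.2 + 1))) ≤
      ⨆ (p : ℕ × ℕ) (_ : n < p.1 + p.2), range (mapIncl (F p.1) (G p.2)) := by
  intro x hx
  obtain ⟨e, he_sum, he_range, he_ker⟩ := exists_splitting_of_antitone hF hF0 (n + 1)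
  obtain ⟨e', he'_sum, he'_range, he'_ker⟩ := exists_splitting_of_antitone hG hG0 (n + 1)
  have hx_eq : x = ∑ i ∈ Finset.range (n + 1 + 1), ∑ j ∈ Finset.range (n + 1 + 1),
      map (e i) (e' j) x := by
    conv_lhs => rw [← LinearMap.id_apply (R := K) x, ← map_id, ← he_sum, ← he'_sum, map_sum_sum]
    simp only [LinearMap.sum_apply]
  rw [hx_eq]
  refine Submodule.sum_mem _ fun i _ => Submodule.sum_mem _ fun j _ => ?_
  by_cases hij : n < i + j
  · exact Submodule.mem_iSup_of_mem (i, j) <| Submodule.mem_iSup_of_mem hij <|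
      range_map_le_range_mapIncl (he_range i) (he'_range j) ⟨x, rfl⟩
  · have hx_ker : x ∈ ker (map (e i) (e' j)) := by
      have hmem : (i, n - i) ∈ Finset.HasAntidiagonal.antidiagonal n :=
        Finset.HasAntidiagonal.mem_antidiagonal.2 (by omega)
      have hx_i := (Submodule.mem_iInf _).1 ((Submodule.mem_iInf _).1 hx (i, n - i)) hmem
      refine sup_le (range_mapIncl_le_ker_map_left _ _ (he_ker i (by omega)))
        (range_mapIncl_le_ker_map_right _ _ ((hG (by omega : j + 1 ≤ n - i + 1)).trans
          (he'_ker j (by omega)))) hx_i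
    rw [LinearMap.mem_ker.1 hx_ker]
    exact zero_mem _

theorem iInf_sup_range_mapIncl_eq_iSup (hF : Antitone F) (hG : Antitone G) (hF0 : F 0 = ⊤)
    (hG0 : G 0 = ⊤) (n : ℕ) :
    ⨅ p ∈ Finset.HasAntidiagonal.antidiagonal n,
        range (mapIncl (F (p.1 + 1)) ⊤) ⊔ range (mapIncl ⊤ (G (p.2 + 1))) =
      ⨆ (p : ℕ × ℕ) (_ : n < p.1 + p.2), range (mapIncl (F p.1) (G p.2)) :=
  le_antisymm (iInf_le_iSup_range_mapIncl hF hG hF0 hG0 n) (iSup_range_mapIncl_le_iInf hF hG n)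

end Filtration

theorem Mpow_antitone {M : Submodule K A} (hM : M * M ≤ M) : Antitone (Mpow M) := by
  refine antitone_nat_of_succ_le fun
    | 0 => le_top
    | n + 1 => ?_
  change M ^ (n + 1 + 1) ≤ M ^ (n + 1)
  calc M ^ (n + 1 + 1) = M ^ n * (M * M) := by rw [pow_succ, pow_succ, mul_assoc]
    _ ≤ M ^ n * M := mul_le_mul_right hM _
    _ = M ^ (n + 1) := (pow_succ M n).symm

/-- For an ideal `M` of an algebra `A` and any `n ∈ ℕ`,
`⋂_{k+l=n} (M^{k+1} ⊗ A + A ⊗ M^{l+1}) = Σ_{i+j>n} M^i ⊗ M^j`. -/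
theorem stmt_9 (M : Submodule K A)
    (hM : ∀ a : A, ∀ m ∈ M, a * m ∈ M ∧ m * a ∈ M) (n : ℕ) :
    (⨅ p ∈ Finset.HasAntidiagonal.antidiagonal n,
        (tensorSub (M ^ (p.1 + 1)) ⊤ ⊔ tensorSub ⊤ (M ^ (p.2 + 1))))
      = ⨆ (p : ℕ × ℕ) (_ : n < p.1 + p.2), tensorSub (Mpow M p.1) (Mpow M p.2) := by
  have hMM : M * M ≤ M := Submodule.mul_le.2 fun a _ m hm => (hM a m hm).1
  exact iInf_sup_range_mapIncl_eq_iSup (Mpow_antitone hMM) (Mpow_antitone hMM) rfl rfl n
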